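/- Let u, v ∈ A_N be commuting even permutations. Then the quantity det(v|_{Fix(u)})/det(v) equals 1 if and only if dim Fix(u) + dim Fix(v) − dim Fix(u)∩Fix(v) ≡ N (mod 2), and equals −1 otherwise. In particular, if every subgroup T ⊆ ⟨u,v⟩ satisfies dim (ℂ^N)^T ≡ N (mod 2) (the parity condition PC), then det(v|_{Fix(u)}) = det(v) and det(u|_{Fix(v)}) = det(u). -/

import Mathlib

/-- The linear action of a permutation `σ ∈ S_N` on `ℂ^N`. -/
noncomputable def permLin (N : ℕ) (σ : Equiv.Perm (Fin N)) :
    (Fin N → ℂ) →ₗ[ℂ] (Fin N → ℂ) :=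
  Matrix.toLin' (σ.permMatrix ℂ)

/-- The fixed subspace `Fix(σ) = ker(σ − id)` of a permutation acting on `ℂ^N`. -/
noncomputable def fixSubmodule (N : ℕ) (σ : Equiv.Perm (Fin N)) :
    Submodule ℂ (Fin N → ℂ) :=
  LinearMap.ker (permLin N σ - LinearMap.id)

open Equiv Equiv.Perm

set_option linter.unusedSectionVars false

section General
variable {β : Type*} [Fintype β] [DecidableEq β]

noncomputable def funPerm (π : Perm β) : (β → ℂ) →ₗ[ℂ] (β → ℂ) := LinearMap.funLeft ℂ ℂ ⇑π

lemma funPerm_apply (π : Perm β) (x : β → ℂ) (i : β) : funPerm π x i = x (π i) := rfl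

lemma funPerm_eq_toLin' (π : Perm β) : funPerm π = Matrix.toLin' (π.permMatrix ℂ) := by
  apply LinearMap.ext; intro x; funext i
  simp [funPerm, Matrix.toLin'_apply, Matrix.mulVec, dotProduct, Equiv.toPEquiv,
    PEquiv.toMatrix, Equiv.Perm.permMatrix, LinearMap.funLeft]

lemma det_funPerm (π : Perm β) : LinearMap.det (funPerm π) = (Perm.sign π : ℂ) := by
  rw [funPerm_eq_toLin', LinearMap.det_toLin', Matrix.det_permutation]

/-- number of orbits -/
noncomputable def nOrb (π : Perm β) : ℕ := Nat.card (Quotient (SameCycle.setoid π))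

lemma nOrb_le_card (π : Perm β) : nOrb π ≤ Fintype.card β := by
  have := Nat.card_le_card_of_surjective (Quotient.mk (SameCycle.setoid π))
    Quotient.mk''_surjective
  unfold nOrb
  simpa [Nat.card_eq_fintype_card] using this

lemma nOrb_eq (π : Perm β) :
    nOrb π = (Fintype.card β - π.cycleType.sum) + Multiset.card π.cycleType := by
  classical
  set g : β → ({x : β // π x = x} ⊕ π.cycleFactorsFinset) := fun x =>
    if h : π x = x then Sum.inl ⟨x, h⟩ else
      Sum.inr ⟨π.cycleOf x, by rw [cycleOf_mem_cycleFactorsFinset_iff, mem_support]; exact h⟩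
    with hg
  have hresp : ∀ a b : β, π.SameCycle a b → g a = g b := by
    intro a b hab
    by_cases ha : π a = a
    · have : a = b := hab.eq_of_left ha
      subst this; rfl
    · have hb : ¬ π b = b := fun hb => ha ((hab.apply_eq_self_iff).2 hb)
      rw [hg]; dsimp only
      rw [dif_neg ha, dif_neg hb]
      exact congrArg _ (Subtype.ext hab.cycleOf_eq)
  set G : Quotient (SameCycle.setoid π) → ({x : β // π x = x} ⊕ π.cycleFactorsFinset) :=
    Quotient.lift g hresp with hG
  have hbij : Function.Bijective G := by
    constructor
    · intro q1 q2
      induction q1 using Quotient.ind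
      induction q2 using Quotient.ind
      rename_i a b
      intro h
      have h' : g a = g b := h
      by_cases ha : π a = a <;> by_cases hb : π b = b <;>
        rw [hg] at h' <;> dsimp only at h' <;>
        [rw [dif_pos ha, dif_pos hb] at h'; rw [dif_pos ha, dif_neg hb] at h';
         rw [dif_neg ha, dif_pos hb] at h'; rw [dif_neg ha, dif_neg hb] at h']
      · have : a = b := congrArg Subtype.val (Sum.inl.inj h')
        exact congrArg _ this
      · exact absurd h' (by simp)
      · exact absurd h' (by simp)
      · apply Quotient.sound
        have hc : π.cycleOf a = π.cycleOf b := congrArg Subtype.val (Sum.inr.inj h')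
        have hbmem : b ∈ (π.cycleOf a).support := by
          rw [hc, mem_support_cycleOf_iff]
          exact ⟨SameCycle.refl _ _, mem_support.2 hb⟩
        exact (mem_support_cycleOf_iff.1 hbmem).1
    · rintro (⟨x, hx⟩ | ⟨c, hc⟩)
      · exact ⟨Quotient.mk _ x, by simp only [hG, Quotient.lift_mk, hg]; rw [dif_pos hx]⟩
      · obtain ⟨x, hxc⟩ := (mem_cycleFactorsFinset_iff.1 hc).1.nonempty_support
        have hcx : c = π.cycleOf x := cycle_is_cycleOf hxc hc
        have hx : ¬ π x = x := by
          have h1 := (mem_cycleFactorsFinset_iff.1 hc).2 x hxc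
          have h2 : c x ≠ x := mem_support.1 hxc
          rw [h1] at h2; exact h2
        refine ⟨Quotient.mk _ x, ?_⟩
        simp only [hG, Quotient.lift_mk, hg]
        rw [dif_neg hx]
        exact congrArg _ (Subtype.ext hcx.symm)
  have hcard := Nat.card_eq_of_bijective _ hbij
  rw [nOrb, hcard, Nat.card_sum, Nat.card_eq_fintype_card, Nat.card_eq_fintype_card]
  congr 1
  · rw [← Equiv.Perm.card_fixedPoints π]
    apply Fintype.card_congr
    exact Equiv.subtypeEquivRight (fun x => Iff.rfl)
  · rw [cycleType_def, Multiset.card_map]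
    simp [Fintype.card_coe]

lemma neg_one_pow_par {m n : ℕ} (h : m % 2 = n % 2) : ((-1:ℂ))^m = (-1)^n := by
  conv_lhs => rw [← Nat.div_add_mod m 2]
  conv_rhs => rw [← Nat.div_add_mod n 2]
  rw [h, pow_add, pow_add, pow_mul, pow_mul]
  norm_num

lemma sign_eq_nOrb (π : Perm β) :
    (Perm.sign π : ℂ) = (-1) ^ (Fintype.card β - nOrb π) := by
  have h1 : Perm.sign π = (-1 : ℤˣ) ^ (π.cycleType.sum + Multiset.card π.cycleType) :=
    sign_of_cycleType π
  have hsum : π.cycleType.sum ≤ Fintype.card β := by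
    rw [sum_cycleType]; exact (Finset.card_le_card (Finset.subset_univ _)).trans_eq
      (Finset.card_univ)
  have hcardle : Multiset.card π.cycleType ≤ π.cycleType.sum := by
    have := Multiset.card_nsmul_le_sum (s := π.cycleType) (a := 1)
      (fun x hx => one_le_two.trans (two_le_of_mem_cycleType hx))
    simpa using this
  have h2 : (Fintype.card β - nOrb π) % 2 = (π.cycleType.sum + Multiset.card π.cycleType) % 2 := by
    rw [nOrb_eq]; omega
  rw [h1]
  push_cast
  exact (neg_one_pow_par h2).symm

end General

section General2
variable {β : Type*}

lemma apply_zpow_eq (π : Perm β) (x : β → ℂ) (hx : ∀ i, x (π i) = x i) (k : ℤ) :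
    ∀ i, x ((π ^ k) i) = x i := by
  induction k using Int.induction_on with
  | zero => simp
  | succ k ih =>
    intro i
    have h1 : (π ^ ((k : ℤ) + 1)) i = (π ^ (k : ℤ)) (π i) := by
      rw [zpow_add_one]; rfl
    rw [h1, ih (π i), hx i]
  | pred k ih =>
    intro i
    have h1 : (π ^ ((-k : ℤ) - 1)) i = (π ^ (-k : ℤ)) (π⁻¹ i) := by
      rw [zpow_sub_one]; rfl
    have h2 : x (π⁻¹ i) = x i := by
      conv_rhs => rw [← (show π (π⁻¹ i) = i from π.apply_symm_apply i)]
      rw [hx (π⁻¹ i)]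
    rw [h1, ih (π⁻¹ i), h2]

lemma const_on_sameCycle {π : Perm β} {x : β → ℂ} (hx : ∀ i, x (π i) = x i) {a b : β}
    (h : π.SameCycle a b) : x a = x b := by
  obtain ⟨k, hk⟩ := h
  rw [← hk, apply_zpow_eq π x hx k a]

/-- descend an invariant vector to the orbit space -/
noncomputable def descend (π : Perm β) (x : β → ℂ) (hx : ∀ i, x (π i) = x i) :
    Quotient (SameCycle.setoid π) → ℂ :=
  Quotient.lift x (fun _ _ h => const_on_sameCycle hx h)

@[simp] lemma descend_mk (π : Perm β) (x : β → ℂ) (hx : ∀ i, x (π i) = x i) (i : β) :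
    descend π x hx (Quotient.mk _ i) = x i := rfl

lemma mk_apply_eq (σ : Perm β) (i : β) :
    Quotient.mk (SameCycle.setoid σ) (σ i) = Quotient.mk (SameCycle.setoid σ) i :=
  Quotient.sound (sameCycle_apply_left.2 (SameCycle.refl σ i))

end General2

section FinN
variable {N : ℕ}

lemma permLin_eq (σ : Perm (Fin N)) : permLin N σ = funPerm σ := (funPerm_eq_toLin' σ).symm

lemma permLin_apply (σ : Perm (Fin N)) (x : Fin N → ℂ) (i : Fin N) :
    permLin N σ x i = x (σ i) := by rw [permLin_eq]; rfl

lemma mem_fixSubmodule_iff (σ : Perm (Fin N)) (x : Fin N → ℂ) :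
    x ∈ fixSubmodule N σ ↔ ∀ i, x (σ i) = x i := by
  simp only [fixSubmodule, LinearMap.mem_ker, LinearMap.sub_apply, LinearMap.id_apply,
    sub_eq_zero, funext_iff, permLin_apply]

/-- `Fix(σ) ≃ functions on orbits` -/
noncomputable def fixEquiv (σ : Perm (Fin N)) :
    ↥(fixSubmodule N σ) ≃ₗ[ℂ] (Quotient (SameCycle.setoid σ) → ℂ) where
  toFun x := descend σ x.1 ((mem_fixSubmodule_iff σ x.1).1 x.2)
  map_add' x y := by funext q; induction q using Quotient.ind; rfl
  map_smul' c x := by funext q; induction q using Quotient.ind; rfl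
  invFun y := ⟨fun i => y (Quotient.mk _ i), (mem_fixSubmodule_iff σ _).2
    (fun i => congrArg y (mk_apply_eq σ i))⟩
  left_inv x := Subtype.ext (funext fun i => rfl)
  right_inv y := funext fun q => by induction q using Quotient.ind; rfl

lemma finrank_fixSubmodule (σ : Perm (Fin N)) :
    Module.finrank ℂ ↥(fixSubmodule N σ) = nOrb σ := by
  classical
  rw [(fixEquiv σ).finrank_eq]
  letI : Fintype (Quotient (SameCycle.setoid σ)) := Fintype.ofFinite _
  rw [Module.finrank_pi, nOrb, Nat.card_eq_fintype_card]

end FinN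

section Conj
variable {N : ℕ} (u v : Perm (Fin N))

lemma sameCycle_map (huv : u * v = v * u) {a b : Fin N} (h : u.SameCycle a b) :
    u.SameCycle (v a) (v b) := by
  obtain ⟨k, hk⟩ := h
  refine ⟨k, ?_⟩
  have hc : Commute v (u ^ k) := (Commute.zpow_right (huv.symm) k)
  calc (u ^ k) (v a) = (u ^ k * v) a := rfl
  _ = (v * u ^ k) a := by rw [hc.eq]
  _ = v ((u ^ k) a) := rfl
  _ = v b := by rw [hk]

/-- the permutation induced by `v` on the orbit space of `u` -/
noncomputable def qPerm (huv : u * v = v * u) : Perm (Quotient (SameCycle.setoid u)) where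
  toFun := Quotient.map (⇑v) (fun _ _ h => sameCycle_map u v huv h)
  invFun := Quotient.map (⇑v⁻¹) (fun _ _ h => sameCycle_map u v⁻¹
    (by have hc : Commute u v := huv; exact hc.inv_right.eq) h)
  left_inv q := by induction q using Quotient.ind; simp
  right_inv q := by induction q using Quotient.ind; simp

@[simp] lemma qPerm_mk (huv : u * v = v * u) (i : Fin N) :
    qPerm u v huv (Quotient.mk _ i) = Quotient.mk _ (v i) := rfl

lemma det_restrict_eq (huv : u * v = v * u)
    (h1 : ∀ x ∈ fixSubmodule N u, permLin N v x ∈ fixSubmodule N u) :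
    LinearMap.det ((permLin N v).restrict h1) = LinearMap.det (funPerm (qPerm u v huv)) := by
  rw [← LinearMap.det_conj ((permLin N v).restrict h1) (fixEquiv u)]
  congr 1
  apply LinearMap.ext; intro y; funext q
  induction q using Quotient.ind
  rename_i i
  show (fixEquiv u) ((permLin N v).restrict h1 ((fixEquiv u).symm y)) (Quotient.mk _ i)
    = y (qPerm u v huv (Quotient.mk _ i))
  have h2 : ((permLin N v).restrict h1 ((fixEquiv u).symm y) : Fin N → ℂ) i
      = ((fixEquiv u).symm y : Fin N → ℂ) (v i) := by
    rw [LinearMap.restrict_apply]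
    exact permLin_apply v _ i
  show ((permLin N v).restrict h1 ((fixEquiv u).symm y) : Fin N → ℂ) i = _
  rw [h2, qPerm_mk]
  rfl

/-- the intersection of fixed spaces is functions on the orbit space of `qPerm` -/
noncomputable def interEquiv (huv : u * v = v * u) :
    ↥(fixSubmodule N u ⊓ fixSubmodule N v) ≃ₗ[ℂ]
      (Quotient (SameCycle.setoid (qPerm u v huv)) → ℂ) where
  toFun x := descend (qPerm u v huv) (descend u x.1 ((mem_fixSubmodule_iff u x.1).1 x.2.1))
    (by
      intro c
      induction c using Quotient.ind
      rename_i i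
      rw [qPerm_mk]
      exact (mem_fixSubmodule_iff v x.1).1 x.2.2 i)
  map_add' x y := by
    funext q; induction q using Quotient.ind; rename_i c; induction c using Quotient.ind; rfl
  map_smul' c x := by
    funext q; induction q using Quotient.ind; rename_i c; induction c using Quotient.ind; rfl
  invFun Y := ⟨fun i => Y (Quotient.mk _ (Quotient.mk _ i)),
    ⟨(mem_fixSubmodule_iff u _).2 (fun i => congrArg Y (congrArg _ (mk_apply_eq u i))),
     (mem_fixSubmodule_iff v _).2 (fun i => by
       have : Quotient.mk (SameCycle.setoid u) (v i) = qPerm u v huv (Quotient.mk _ i) := rfl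
       rw [this]
       exact congrArg Y (mk_apply_eq (qPerm u v huv) (Quotient.mk _ i)))⟩⟩
  left_inv x := Subtype.ext (funext fun i => rfl)
  right_inv Y := funext fun q => by
    induction q using Quotient.ind; rename_i c; induction c using Quotient.ind; rfl

lemma finrank_inter (huv : u * v = v * u) :
    Module.finrank ℂ ↥(fixSubmodule N u ⊓ fixSubmodule N v) = nOrb (qPerm u v huv) := by
  classical
  rw [(interEquiv u v huv).finrank_eq]
  letI : Fintype (Quotient (SameCycle.setoid (qPerm u v huv))) := Fintype.ofFinite _
  rw [Module.finrank_pi, nOrb, Nat.card_eq_fintype_card]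

lemma det_restrict_formula (huv : u * v = v * u)
    (h1 : ∀ x ∈ fixSubmodule N u, permLin N v x ∈ fixSubmodule N u) :
    LinearMap.det ((permLin N v).restrict h1) =
      (-1 : ℂ) ^ (Module.finrank ℂ ↥(fixSubmodule N u)
        - Module.finrank ℂ ↥(fixSubmodule N u ⊓ fixSubmodule N v)) := by
  classical
  letI : Fintype (Quotient (SameCycle.setoid u)) := Fintype.ofFinite _
  letI : DecidableEq (Quotient (SameCycle.setoid u)) := Classical.decEq _
  rw [det_restrict_eq u v huv h1, det_funPerm, sign_eq_nOrb, finrank_fixSubmodule,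
    finrank_inter u v huv]
  simp only [nOrb, Nat.card_eq_fintype_card]

lemma inter_finrank_le_left (huv : u * v = v * u) :
    Module.finrank ℂ ↥(fixSubmodule N u ⊓ fixSubmodule N v)
      ≤ Module.finrank ℂ ↥(fixSubmodule N u) := by
  classical
  letI : Fintype (Quotient (SameCycle.setoid u)) := Fintype.ofFinite _
  letI : Fintype (Quotient (SameCycle.setoid (qPerm u v huv))) := Fintype.ofFinite _
  rw [finrank_inter u v huv, finrank_fixSubmodule]
  have h := nOrb_le_card (qPerm u v huv)
  simpa [nOrb, Nat.card_eq_fintype_card] using h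

end Conj

section Final
variable {N : ℕ}

lemma det_permLin (σ : Perm (Fin N)) : LinearMap.det (permLin N σ) = (Perm.sign σ : ℂ) := by
  rw [permLin_eq]; exact det_funPerm σ

lemma nOrb_le_N (σ : Perm (Fin N)) : nOrb σ ≤ N := by
  have := nOrb_le_card σ
  rwa [Fintype.card_fin] at this

lemma parity_of_even (σ : Perm (Fin N)) (h : σ ∈ alternatingGroup (Fin N)) :
    Module.finrank ℂ ↥(fixSubmodule N σ) % 2 = N % 2 := by
  have hs : Perm.sign σ = 1 := Equiv.Perm.mem_alternatingGroup.1 h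
  have h1 : (1 : ℂ) = (-1) ^ (N - nOrb σ) := by
    have := sign_eq_nOrb σ
    rw [hs, Fintype.card_fin] at this
    simpa using this
  have h2 : Even (N - nOrb σ) := by
    rcases Nat.even_or_odd (N - nOrb σ) with he | ho
    · exact he
    · rw [ho.neg_one_pow] at h1
      norm_num at h1
  have h3 := nOrb_le_N σ
  rw [finrank_fixSubmodule]
  obtain ⟨k, hk⟩ := h2
  omega

lemma fix_iInf (S : Set (Perm (Fin N))) :
    (⨅ g ∈ Subgroup.closure S, fixSubmodule N g) = ⨅ g ∈ S, fixSubmodule N g := by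
  apply le_antisymm
  · exact le_iInf₂ fun g hg => iInf₂_le g (Subgroup.subset_closure hg)
  · refine le_iInf₂ fun g hg => ?_
    induction hg using Subgroup.closure_induction with
    | mem g hgS => exact iInf₂_le g hgS
    | one =>
        intro x _
        rw [mem_fixSubmodule_iff]; intro i; rfl
    | mul g h hgc hhc ihg ihh =>
        intro x hx
        have hxg := ihg hx
        have hxh := ihh hx
        rw [mem_fixSubmodule_iff] at hxg hxh ⊢
        intro i
        calc x ((g * h) i) = x (g (h i)) := rfl
          _ = x (h i) := hxg _
          _ = x i := hxh i
    | inv g hgc ihg =>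
        intro x hx
        have hxg := ihg hx
        rw [mem_fixSubmodule_iff] at hxg ⊢
        intro i
        have := hxg (g⁻¹ i)
        rw [show g (g⁻¹ i) = i from g.apply_symm_apply i] at this
        exact this.symm

end Final

/-- For commuting even permutations `u, v ∈ A_N`:
`det(v|_{Fix(u)})/det(v) = 1` iff
`dim Fix(u) + dim Fix(v) − dim(Fix(u) ∩ Fix(v)) ≡ N (mod 2)`, and `= −1`
otherwise; moreover if every subgroup `T ⊆ ⟨u,v⟩` satisfies the parity
condition `dim (ℂ^N)^T ≡ N (mod 2)`, then `det(v|_{Fix(u)}) = det(v)` and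
`det(u|_{Fix(v)}) = det(u)`. -/
theorem parity_condition_det (N : ℕ) (u v : Equiv.Perm (Fin N))
    (hu : u ∈ alternatingGroup (Fin N)) (hv : v ∈ alternatingGroup (Fin N))
    (huv : u * v = v * u)
    (h1 : ∀ x ∈ fixSubmodule N u, permLin N v x ∈ fixSubmodule N u)
    (h2 : ∀ x ∈ fixSubmodule N v, permLin N u x ∈ fixSubmodule N v) :
    ((LinearMap.det ((permLin N v).restrict h1) / LinearMap.det (permLin N v) = 1
        ↔ (Module.finrank ℂ (fixSubmodule N u) + Module.finrank ℂ (fixSubmodule N v)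
            - Module.finrank ℂ ↥(fixSubmodule N u ⊓ fixSubmodule N v)) % 2 = N % 2)
      ∧ (¬ ((Module.finrank ℂ (fixSubmodule N u) + Module.finrank ℂ (fixSubmodule N v)
            - Module.finrank ℂ ↥(fixSubmodule N u ⊓ fixSubmodule N v)) % 2 = N % 2)
          → LinearMap.det ((permLin N v).restrict h1) / LinearMap.det (permLin N v)
              = -1))
    ∧ ((∀ T : Subgroup (Equiv.Perm (Fin N)), T ≤ Subgroup.closure {u, v} →
          Module.finrank ℂ ↥(⨅ g ∈ T, fixSubmodule N g) % 2 = N % 2) →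
        LinearMap.det ((permLin N v).restrict h1) = LinearMap.det (permLin N v)
        ∧ LinearMap.det ((permLin N u).restrict h2) = LinearMap.det (permLin N u)) := by
  set a := Module.finrank ℂ ↥(fixSubmodule N u) with ha
  set b := Module.finrank ℂ ↥(fixSubmodule N v) with hb
  set c := Module.finrank ℂ ↥(fixSubmodule N u ⊓ fixSubmodule N v) with hc
  have hcomm : fixSubmodule N u ⊓ fixSubmodule N v = fixSubmodule N v ⊓ fixSubmodule N u :=
    inf_comm _ _
  have hca : c ≤ a := inter_finrank_le_left u v huv
  have hcb : c ≤ b := by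
    rw [hc, hcomm]
    exact inter_finrank_le_left v u huv.symm
  have haN : a % 2 = N % 2 := parity_of_even u hu
  have hbN : b % 2 = N % 2 := parity_of_even v hv
  have hdetv : LinearMap.det (permLin N v) = 1 := by
    rw [det_permLin, Equiv.Perm.mem_alternatingGroup.1 hv]; simp
  have hdetu : LinearMap.det (permLin N u) = 1 := by
    rw [det_permLin, Equiv.Perm.mem_alternatingGroup.1 hu]; simp
  have hres : LinearMap.det ((permLin N v).restrict h1) = (-1 : ℂ) ^ (a - c) :=
    det_restrict_formula u v huv h1
  have hresu : LinearMap.det ((permLin N u).restrict h2) = (-1 : ℂ) ^ (b - c) := by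
    have := det_restrict_formula v u huv.symm h2
    rwa [← hcomm, ← hc, ← hb] at this
  have hratio : LinearMap.det ((permLin N v).restrict h1) / LinearMap.det (permLin N v)
      = (-1 : ℂ) ^ (a - c) := by rw [hdetv, div_one, hres]
  refine ⟨⟨?_, ?_⟩, ?_⟩
  · rw [hratio]
    constructor
    · intro hpow
      have heven : Even (a - c) := by
        rcases Nat.even_or_odd (a - c) with he | ho
        · exact he
        · rw [ho.neg_one_pow] at hpow; norm_num at hpow
      obtain ⟨k, hk⟩ := heven
      omega
    · intro hcond
      have heven : Even (a - c) := by
        rcases Nat.even_or_odd (a - c) with he | ho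
        · exact he
        · exfalso; obtain ⟨k, hk⟩ := ho; omega
      exact heven.neg_one_pow
  · intro hcond
    rw [hratio]
    have hodd : Odd (a - c) := by
      rcases Nat.even_or_odd (a - c) with he | ho
      · exfalso; obtain ⟨k, hk⟩ := he; omega
      · exact ho
    exact hodd.neg_one_pow
  · intro hPC
    have h3 : (⨅ g ∈ Subgroup.closure ({u, v} : Set (Equiv.Perm (Fin N))), fixSubmodule N g)
        = fixSubmodule N u ⊓ fixSubmodule N v := by
      rw [fix_iInf]; exact iInf_pair
    have hcN : c % 2 = N % 2 := by
      have := hPC (Subgroup.closure {u, v}) le_rfl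
      rwa [h3] at this
    have hac : Even (a - c) := Nat.even_iff.2 (by omega)
    have hbc : Even (b - c) := Nat.even_iff.2 (by omega)
    refine ⟨?_, ?_⟩
    · rw [hres, hdetv, hac.neg_one_pow]
    · rw [hresu, hdetu, hbc.neg_one_pow]
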